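/- Let (X_i, T_i, ε_i), i = 1, 2, …, be an i.i.d. sequence where X_i takes values in a finite set 𝒳 = ∏_{j=1}^m 𝒳_j of discrete feature vectors, T_i ∈ {0,1}, and ε_i is independent of (X_i, T_i) with ε_i ~ N(0, σ²) for some σ > 0. Fix K ⊆ {1,…,m} with projection π_K, and suppose Y_i = f(π_K(X_i)) + c · T_i + ε_i for some function f and constant c ∈ ℝ. Then: (1) for every x ∈ 𝒳, the individual treatment effect ITE(x) := E[Y | X = x, T = 1] − E[Y | X = x, T = 0] equals c; and (2) for any a ∈ ∏_{j∈K} 𝒳_j with ℙ(π_K(X_1) = a, T_1 = 1) > 0 and ℙ(π_K(X_1) = a, T_1 = 0) > 0, the matched-subgroup estimator ÎTE_n(a) := ŷ_n(a,1) − ŷ_n(a,0) converges to c almost surely as n → ∞, so that ( ITE(x) − ÎTE_n(π_K(x)) )² → 0 with probability 1 for every x. -/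

import Mathlib

/-!
By independence, conditioning on an event determined by `(X₀, T₀)` leaves the law `N(0, σ²)` of
`ε₀` unchanged. Hence on any such event that fixes `π_K X₀ = k` and `T₀ = t` the outcome
`f k + c t + ε₀` has conditional mean `f k + c t`, and the two conditional means in the treatment
effect differ by `c`. The matched estimator `ŷₙ(a, t)` is the quotient of the empirical means of
`1[π_K Xᵢ = a, Tᵢ = t] Yᵢ` and of `1[π_K Xᵢ = a, Tᵢ = t]`; by the strong law they converge a.s. to
`ℙ(π_K X₀ = a, T₀ = t) · E[Y₀ | π_K X₀ = a, T₀ = t]` and to `ℙ(π_K X₀ = a, T₀ = t) > 0`, so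
`ŷₙ(a, t) → f a + c t`.
-/

open MeasureTheory ProbabilityTheory Filter Finset
open scoped Classical NNReal Topology

lemma tendsto_div_of_tendsto_div_natCast {u v : ℕ → ℝ} {a b : ℝ}
    (hu : Tendsto (fun n ↦ u n / n) atTop (𝓝 a)) (hv : Tendsto (fun n ↦ v n / n) atTop (𝓝 b))
    (hb : b ≠ 0) : Tendsto (fun n ↦ u n / v n) atTop (𝓝 (a / b)) := by
  refine (hu.div hv hb).congr' ?_
  filter_upwards [eventually_ne_atTop 0] with n hn
  exact div_div_div_cancel_right₀ (Nat.cast_ne_zero.mpr hn) _ _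

namespace ProbabilityTheory

variable {Ω α β : Type*} {mΩ : MeasurableSpace Ω} {mα : MeasurableSpace α}
  {mβ : MeasurableSpace β} {μ : Measure Ω}

lemma setIntegral_eq_measureReal_mul_integral_cond [IsFiniteMeasure μ] (s : Set Ω)
    (g : Ω → ℝ) : ∫ ω in s, g ω ∂μ = μ.real s * ∫ ω, g ω ∂μ[|s] := by
  by_cases hs : μ s = 0
  · simp [Measure.restrict_eq_zero.mpr hs, measureReal_def, hs]
  · rw [cond, integral_smul_measure, smul_eq_mul, ← mul_assoc, ENNReal.toReal_inv,
      measureReal_def, mul_inv_cancel₀ (ENNReal.toReal_ne_zero.mpr ⟨hs, measure_ne_top μ s⟩),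
      one_mul]

lemma integrableOn_of_integrable_cond [IsFiniteMeasure μ] {s : Set Ω} {g : Ω → ℝ}
    (hs : μ s ≠ 0) (hg : Integrable g μ[|s]) : IntegrableOn g s μ :=
  (integrable_smul_measure (ENNReal.inv_ne_zero.mpr (measure_ne_top μ s))
    (ENNReal.inv_ne_top.mpr hs)).mp hg

lemma HasLaw.integrable_of_integrable_id {e : Ω → ℝ} {ν : Measure ℝ} (he : HasLaw e ν μ)
    (hν : Integrable id ν) : Integrable e μ := by
  rw [← he.map_eq] at hν
  exact (integrable_map_measure aestronglyMeasurable_id he.aemeasurable).mp hν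

lemma IndepFun.hasLaw_cond_preimage [IsFiniteMeasure μ] {W : Ω → α} {e : Ω → β}
    {ν : Measure β} (hW : Measurable W) (hWe : IndepFun W e μ) (he : HasLaw e ν μ)
    {A : Set α} (hA : MeasurableSet A) (hpos : μ (W ⁻¹' A) ≠ 0) :
    HasLaw e ν μ[|W ⁻¹' A] where
  aemeasurable := he.aemeasurable.mono_ac cond_absolutelyContinuous
  map_eq := by
    ext B hB
    rw [← he.map_eq, Measure.map_apply_of_aemeasurable
        (he.aemeasurable.mono_ac cond_absolutelyContinuous) hB,
      Measure.map_apply_of_aemeasurable he.aemeasurable hB, cond_apply (hW hA),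
      hWe.measure_inter_preimage_eq_mul _ _ hA hB, ← mul_assoc,
      ENNReal.inv_mul_cancel hpos (measure_ne_top _ _), one_mul]

lemma ae_tendsto_sum_comp_div_natCast {Z : ℕ → Ω → β} (hindep : iIndepFun Z μ)
    (hident : ∀ i, IdentDistrib (Z i) (Z 0) μ μ) {φ : β → ℝ} (hφ : Measurable φ)
    (hint : Integrable (fun ω ↦ φ (Z 0 ω)) μ) :
    ∀ᵐ ω ∂μ, Tendsto (fun n : ℕ ↦ (∑ i ∈ range n, φ (Z i ω)) / n) atTop
      (𝓝 (∫ ω, φ (Z 0 ω) ∂μ)) :=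
  strong_law_ae_real (fun i ω ↦ φ (Z i ω)) hint
    (fun _ _ hij ↦ (hindep.indepFun hij).comp hφ hφ) (fun i ↦ (hident i).comp hφ)

theorem ae_tendsto_sum_indicator_div_sum_indicator [IsFiniteMeasure μ] {Z : ℕ → Ω → β}
    (hZ : Measurable (Z 0)) (hindep : iIndepFun Z μ)
    (hident : ∀ i, IdentDistrib (Z i) (Z 0) μ μ) {S : Set β} (hS : MeasurableSet S)
    {φ : β → ℝ} (hφ : Measurable φ) (hint : Integrable (fun ω ↦ φ (Z 0 ω)) μ[|Z 0 ⁻¹' S])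
    (hpos : μ (Z 0 ⁻¹' S) ≠ 0) :
    ∀ᵐ ω ∂μ, Tendsto (fun n : ℕ ↦
        (∑ i ∈ range n, S.indicator φ (Z i ω)) / ∑ i ∈ range n, S.indicator 1 (Z i ω))
      atTop (𝓝 (∫ ω, φ (Z 0 ω) ∂μ[|Z 0 ⁻¹' S])) := by
  have hs : MeasurableSet (Z 0 ⁻¹' S) := hZ hS
  have hnum : ∫ ω, S.indicator φ (Z 0 ω) ∂μ =
      μ.real (Z 0 ⁻¹' S) * ∫ ω, φ (Z 0 ω) ∂μ[|Z 0 ⁻¹' S] := by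
    simp_rw [← Set.indicator_comp_right]
    rw [integral_indicator hs, setIntegral_eq_measureReal_mul_integral_cond]
    rfl
  have hden : ∫ ω, S.indicator (1 : β → ℝ) (Z 0 ω) ∂μ = μ.real (Z 0 ⁻¹' S) := by
    simp_rw [← Set.indicator_comp_right]
    exact integral_indicator_one hs
  have hint_num : Integrable (fun ω ↦ S.indicator φ (Z 0 ω)) μ := by
    simp_rw [← Set.indicator_comp_right]
    exact (integrableOn_of_integrable_cond hpos hint).integrable_indicator hs
  have hint_den : Integrable (fun ω ↦ S.indicator (1 : β → ℝ) (Z 0 ω)) μ := by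
    simp_rw [← Set.indicator_comp_right]
    exact (integrable_const 1).indicator hs
  filter_upwards [ae_tendsto_sum_comp_div_natCast hindep hident (hφ.indicator hS) hint_num,
    ae_tendsto_sum_comp_div_natCast hindep hident (measurable_one.indicator hS) hint_den]
    with ω hu hv
  have hreal : μ.real (Z 0 ⁻¹' S) ≠ 0 := (measureReal_ne_zero_iff (measure_ne_top μ _)).mpr hpos
  rw [hnum] at hu
  rw [hden] at hv
  simpa [hreal] using tendsto_div_of_tendsto_div_natCast hu hv hreal

lemma IndepFun.integrable_and_integral_cond_preimage [IsProbabilityMeasure μ] {W : Ω → α}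
    {e V : Ω → ℝ} {ν : Measure ℝ} (hW : Measurable W) (hWe : IndepFun W e μ)
    (he : HasLaw e ν μ) (hν : Integrable id ν) {A : Set α} (hA : MeasurableSet A)
    (hpos : μ (W ⁻¹' A) ≠ 0) {r : ℝ} (hV : ∀ ω ∈ W ⁻¹' A, V ω = r + e ω) :
    Integrable V μ[|W ⁻¹' A] ∧ ∫ ω, V ω ∂μ[|W ⁻¹' A] = r + ∫ x, x ∂ν := by
  have := cond_isProbabilityMeasure hpos
  have he' := hWe.hasLaw_cond_preimage hW he hA hpos
  have hVe : V =ᵐ[μ[|W ⁻¹' A]] fun ω ↦ r + e ω := ae_cond_of_forall_mem (hW hA) hV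
  have he_int := he'.integrable_of_integrable_id hν
  refine ⟨((integrable_const r).add he_int).congr hVe.symm, ?_⟩
  rw [integral_congr_ae hVe, integral_add (integrable_const r) he_int, integral_const,
    probReal_univ, one_smul, he'.integral_eq]

end ProbabilityTheory

section OutcomeModel

variable {Ω : Type*} {mΩ : MeasurableSpace Ω} {μ : Measure Ω} [IsProbabilityMeasure μ]
  {m : ℕ} {𝒳 : Fin m → Type*} [∀ j, Fintype (𝒳 j)] [∀ j, MeasurableSpace (𝒳 j)]
  [∀ j, MeasurableSingletonClass (𝒳 j)] {X : ℕ → Ω → ∀ j, 𝒳 j} {T : ℕ → Ω → Bool}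
  {ε : ℕ → Ω → ℝ} {σ : ℝ≥0} {K : Finset (Fin m)} {f : ((j : K) → 𝒳 j.1) → ℝ} {c : ℝ}

lemma integrable_and_integral_cond_outcome (hW : Measurable fun ω ↦ (X 0 ω, T 0 ω))
    (hε_indep : IndepFun (fun ω ↦ (X 0 ω, T 0 ω)) (ε 0) μ)
    (hε : HasLaw (ε 0) (gaussianReal 0 (σ ^ 2)) μ) {A : Set ((∀ j, 𝒳 j) × Bool)}
    {k : (j : K) → 𝒳 j.1} {t : Bool} (hA : ∀ z ∈ A, (fun j : K ↦ z.1 j.1) = k ∧ z.2 = t)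
    (hpos : μ ((fun ω ↦ (X 0 ω, T 0 ω)) ⁻¹' A) ≠ 0) :
    Integrable (fun ω ↦ f (fun j : K ↦ X 0 ω j.1) + c * (if T 0 ω then 1 else 0) + ε 0 ω)
        μ[|(fun ω ↦ (X 0 ω, T 0 ω)) ⁻¹' A] ∧
      ∫ ω, f (fun j : K ↦ X 0 ω j.1) + c * (if T 0 ω then 1 else 0) + ε 0 ω
        ∂μ[|(fun ω ↦ (X 0 ω, T 0 ω)) ⁻¹' A] = f k + c * if t then 1 else 0 := by
  obtain ⟨hint, hmean⟩ := hε_indep.integrable_and_integral_cond_preimage hW hε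
    ((memLp_id_gaussianReal 1).integrable le_rfl) (Set.toFinite A).measurableSet hpos
    (r := f k + c * if t then 1 else 0) fun ω hω ↦ by
      obtain ⟨hk, ht⟩ := hA _ hω
      rw [← hk, ← ht]
  rw [integral_id_gaussianReal, add_zero] at hmean
  exact ⟨hint, hmean⟩

lemma ae_tendsto_matched_subgroup_mean
    (hmeas : Measurable fun ω ↦ (X 0 ω, T 0 ω, ε 0 ω))
    (hindep : iIndepFun (fun i ω ↦ (X i ω, T i ω, ε i ω)) μ)
    (hident : ∀ i, IdentDistrib (fun ω ↦ (X i ω, T i ω, ε i ω))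
      (fun ω ↦ (X 0 ω, T 0 ω, ε 0 ω)) μ μ)
    (hε_indep : IndepFun (fun ω ↦ (X 0 ω, T 0 ω)) (ε 0) μ)
    (hε : HasLaw (ε 0) (gaussianReal 0 (σ ^ 2)) μ) (a : (j : K) → 𝒳 j.1) (b : Bool)
    (hpos : μ {ω | (fun j : K ↦ X 0 ω j.1) = a ∧ T 0 ω = b} ≠ 0) :
    ∀ᵐ ω ∂μ, Tendsto (fun n : ℕ ↦
      (∑ i ∈ range n, if (fun j : K ↦ X i ω j.1) = a ∧ T i ω = b then
        f (fun j : K ↦ X i ω j.1) + c * (if T i ω then 1 else 0) + ε i ω else 0) /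
      (∑ i ∈ range n, if (fun j : K ↦ X i ω j.1) = a ∧ T i ω = b then (1 : ℝ) else 0))
      atTop (𝓝 (f a + c * if b then 1 else 0)) := by
  have hφ : Measurable fun z : (∀ j, 𝒳 j) × Bool × ℝ ↦
      f (fun j : K ↦ z.1 j.1) + c * (if z.2.1 then 1 else 0) + z.2.2 :=
    ((Measurable.of_discrete (f := fun p : (∀ j, 𝒳 j) × Bool ↦
      f (fun j : K ↦ p.1 j.1) + c * if p.2 then 1 else 0)).comp
        (measurable_fst.prodMk measurable_snd.fst)).add measurable_snd.snd
  obtain ⟨hint, hmean⟩ := integrable_and_integral_cond_outcome (f := f) (c := c)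
    (A := {z | (fun j : K ↦ z.1 j.1) = a ∧ z.2 = b})
    ((measurable_fst.prodMk measurable_snd.fst).comp hmeas) hε_indep hε (fun _ h ↦ h) hpos
  filter_upwards [ae_tendsto_sum_indicator_div_sum_indicator
    (Z := fun i ω ↦ (X i ω, T i ω, ε i ω))
    (S := (fun z : (∀ j, 𝒳 j) × Bool × ℝ ↦ (z.1, z.2.1)) ⁻¹'
      {p | (fun j : K ↦ p.1 j.1) = a ∧ p.2 = b})
    hmeas hindep hident ((measurable_fst.prodMk measurable_snd.fst)
      (Set.toFinite _).measurableSet) hφ hint hpos] with ω h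
  convert h using 2
  · simp only [Set.indicator_apply, Set.mem_preimage, Set.mem_ofPred_eq, Pi.one_apply]
  · exact hmean.symm

end OutcomeModel

theorem ite_identification_and_consistency_general
    {Ω : Type*} {mΩ : MeasurableSpace Ω} (μ : Measure Ω) [IsProbabilityMeasure μ]
    {m : ℕ} (𝒳 : Fin m → Type*) [∀ j, Fintype (𝒳 j)]
    [∀ j, MeasurableSpace (𝒳 j)] [∀ j, MeasurableSingletonClass (𝒳 j)]
    (X : ℕ → Ω → ∀ j, 𝒳 j) (T : ℕ → Ω → Bool) (ε : ℕ → Ω → ℝ)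
    (hmeas : ∀ i, Measurable fun ω => (X i ω, T i ω, ε i ω))
    -- the triples (Xᵢ, Tᵢ, εᵢ) are independent ...
    (hindep : iIndepFun
      (fun i ω => (X i ω, T i ω, ε i ω)) μ)
    -- ... and identically distributed
    (hident : ∀ i, IdentDistrib (fun ω => (X i ω, T i ω, ε i ω))
      (fun ω => (X 0 ω, T 0 ω, ε 0 ω)) μ μ)
    -- εᵢ is independent of (Xᵢ, Tᵢ)
    (hε_indep : ∀ i, IndepFun (fun ω => (X i ω, T i ω)) (ε i) μ)
    -- εᵢ ~ N(0, σ²) with σ > 0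
    (σ : ℝ≥0)
    (hgauss : ∀ i, Measure.map (ε i) μ = gaussianReal 0 (σ ^ 2))
    -- outcome model Yᵢ = f(π_K(Xᵢ)) + c·Tᵢ + εᵢ
    (K : Finset (Fin m)) (f : ((j : K) → 𝒳 j.1) → ℝ) (c : ℝ)
    (Y : ℕ → Ω → ℝ)
    (hY : ∀ i ω, Y i ω =
      f (fun j : K => X i ω j.1) + c * (if T i ω then 1 else 0) + ε i ω)
    (a : (j : K) → 𝒳 j.1)
    (ha1 : 0 < μ {ω | (fun j : K => X 0 ω j.1) = a ∧ T 0 ω = true})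
    (ha0 : 0 < μ {ω | (fun j : K => X 0 ω j.1) = a ∧ T 0 ω = false}) :
    -- (1) ITE(x) = E[Y | X = x, T = 1] − E[Y | X = x, T = 0] = c for every x
    (∀ x : ∀ j, 𝒳 j,
      0 < μ {ω | X 0 ω = x ∧ T 0 ω = true} →
      0 < μ {ω | X 0 ω = x ∧ T 0 ω = false} →
      (∫ ω, Y 0 ω ∂μ[|{ω | X 0 ω = x ∧ T 0 ω = true}]) -
        (∫ ω, Y 0 ω ∂μ[|{ω | X 0 ω = x ∧ T 0 ω = false}]) = c) ∧
    -- (2) ÎTEₙ(a) = ŷₙ(a,1) − ŷₙ(a,0) → c almost surely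
    (∀ᵐ ω ∂μ, Tendsto
      (fun n : ℕ =>
        (∑ i ∈ Finset.range n,
            if (fun j : K => X i ω j.1) = a ∧ T i ω = true then Y i ω else 0) /
        (∑ i ∈ Finset.range n,
            if (fun j : K => X i ω j.1) = a ∧ T i ω = true then (1 : ℝ) else 0) -
        ((∑ i ∈ Finset.range n,
            if (fun j : K => X i ω j.1) = a ∧ T i ω = false then Y i ω else 0) /
         (∑ i ∈ Finset.range n,
            if (fun j : K => X i ω j.1) = a ∧ T i ω = false then (1 : ℝ) else 0)))
      atTop (nhds c)) := by
  obtain rfl : Y = fun i ω ↦ f (fun j : K ↦ X i ω j.1) + c * (if T i ω then 1 else 0) + ε i ω :=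
    funext fun i ↦ funext (hY i)
  have hW : Measurable fun ω ↦ (X 0 ω, T 0 ω) := (hmeas 0).fst.prodMk (hmeas 0).snd.fst
  have hε : HasLaw (ε 0) (gaussianReal 0 (σ ^ 2)) μ := ⟨(hmeas 0).snd.snd.aemeasurable, hgauss 0⟩
  refine ⟨fun x hx1 hx0 ↦ ?_, ?_⟩
  · have hfix (t : Bool) (z) (hz : z ∈ {z : (∀ j, 𝒳 j) × Bool | z.1 = x ∧ z.2 = t}) :
        (fun j : K ↦ z.1 j.1) = (fun j : K ↦ x j.1) ∧ z.2 = t := ⟨by rw [hz.1], hz.2⟩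
    exact (congrArg₂ (· - ·)
      (integrable_and_integral_cond_outcome hW (hε_indep 0) hε (hfix true) hx1.ne').2
      (integrable_and_integral_cond_outcome hW (hε_indep 0) hε (hfix false) hx0.ne').2).trans
      (by simp)
  filter_upwards
    [ae_tendsto_matched_subgroup_mean (hmeas 0) hindep hident (hε_indep 0) hε a true ha1.ne',
      ae_tendsto_matched_subgroup_mean (hmeas 0) hindep hident (hε_indep 0) hε a false ha0.ne']
    with ω h1 h0
  convert h1.sub h0 using 2
  simp

/-- for an i.i.d. sequence `(Xᵢ, Tᵢ, εᵢ)` with discrete features,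
binary treatment, Gaussian noise `εᵢ ~ N(0, σ²)` independent of `(Xᵢ, Tᵢ)`, and
outcomes `Yᵢ = f(π_K(Xᵢ)) + c·Tᵢ + εᵢ`:
(1) the individual treatment effect
`ITE(x) = E[Y | X = x, T = 1] − E[Y | X = x, T = 0]` equals `c` for every `x`
(whenever the conditioning events have positive probability), and
(2) the matched-subgroup estimator `ÎTEₙ(a) = ŷₙ(a,1) − ŷₙ(a,0)` converges to `c`
almost surely. -/
theorem ite_identification_and_consistency
    {Ω : Type*} {mΩ : MeasurableSpace Ω} (μ : Measure Ω) [IsProbabilityMeasure μ]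
    {m : ℕ} (𝒳 : Fin m → Type*) [∀ j, Fintype (𝒳 j)]
    [∀ j, MeasurableSpace (𝒳 j)] [∀ j, MeasurableSingletonClass (𝒳 j)]
    (X : ℕ → Ω → ∀ j, 𝒳 j) (T : ℕ → Ω → Bool) (ε : ℕ → Ω → ℝ)
    (hmeas : ∀ i, Measurable fun ω => (X i ω, T i ω, ε i ω))
    -- the triples (Xᵢ, Tᵢ, εᵢ) are independent ...
    (hindep : iIndepFun
      (fun i ω => (X i ω, T i ω, ε i ω)) μ)
    -- ... and identically distributed
    (hident : ∀ i, IdentDistrib (fun ω => (X i ω, T i ω, ε i ω))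
      (fun ω => (X 0 ω, T 0 ω, ε 0 ω)) μ μ)
    -- εᵢ is independent of (Xᵢ, Tᵢ)
    (hε_indep : ∀ i, IndepFun (fun ω => (X i ω, T i ω)) (ε i) μ)
    -- εᵢ ~ N(0, σ²) with σ > 0
    (σ : ℝ≥0) (hσ : 0 < σ)
    (hgauss : ∀ i, Measure.map (ε i) μ = gaussianReal 0 (σ ^ 2))
    -- outcome model Yᵢ = f(π_K(Xᵢ)) + c·Tᵢ + εᵢ
    (K : Finset (Fin m)) (f : ((j : K) → 𝒳 j.1) → ℝ) (c : ℝ)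
    (Y : ℕ → Ω → ℝ)
    (hY : ∀ i ω, Y i ω =
      f (fun j : K => X i ω j.1) + c * (if T i ω then 1 else 0) + ε i ω)
    (a : (j : K) → 𝒳 j.1)
    (ha1 : 0 < μ {ω | (fun j : K => X 0 ω j.1) = a ∧ T 0 ω = true})
    (ha0 : 0 < μ {ω | (fun j : K => X 0 ω j.1) = a ∧ T 0 ω = false}) :
    -- (1) ITE(x) = E[Y | X = x, T = 1] − E[Y | X = x, T = 0] = c for every x
    (∀ x : ∀ j, 𝒳 j,
      0 < μ {ω | X 0 ω = x ∧ T 0 ω = true} →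
      0 < μ {ω | X 0 ω = x ∧ T 0 ω = false} →
      (∫ ω, Y 0 ω ∂μ[|{ω | X 0 ω = x ∧ T 0 ω = true}]) -
        (∫ ω, Y 0 ω ∂μ[|{ω | X 0 ω = x ∧ T 0 ω = false}]) = c) ∧
    -- (2) ÎTEₙ(a) = ŷₙ(a,1) − ŷₙ(a,0) → c almost surely
    (∀ᵐ ω ∂μ, Tendsto
      (fun n : ℕ =>
        (∑ i ∈ Finset.range n,
            if (fun j : K => X i ω j.1) = a ∧ T i ω = true then Y i ω else 0) /
        (∑ i ∈ Finset.range n,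
            if (fun j : K => X i ω j.1) = a ∧ T i ω = true then (1 : ℝ) else 0) -
        ((∑ i ∈ Finset.range n,
            if (fun j : K => X i ω j.1) = a ∧ T i ω = false then Y i ω else 0) /
         (∑ i ∈ Finset.range n,
            if (fun j : K => X i ω j.1) = a ∧ T i ω = false then (1 : ℝ) else 0)))
      atTop (nhds c)) :=
  ite_identification_and_consistency_general (mΩ := mΩ) μ 𝒳 X T ε hmeas hindep hident hε_indep σ
    hgauss K f c Y hY a ha1 ha0
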